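/- arXiv:1204.5393 — 3 statements merged into one kernel-verified Lean document; each statement's English description precedes it below -/
import Mathlib

section
/- If M is a primitive d×d matrix with nonnegative integer entries, then there exists k ≤ d² − 2d + 2 such that all entries of M^k are strictly positive. -/
/-!
Let `s` be the length of a shortest cycle in the support digraph of `M`, and `S` the set of its
vertices, so `#S = s` and each `u ∈ S` has `0 < (M ^ s) u u`. From any vertex a shortest walk to
`S` has length at most `d - #S`; walking on around the cycle, `S` is reached in exactly `d - s`
steps. At `u ∈ S` the primitive matrix `M ^ s` has a positive diagonal entry, so it reaches every
vertex from `u` in exactly `d - 1` steps (a shortest walk, padded with loops at `u`). Hence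
`M ^ (d - s + s * (d - 1))` is positive. Finally `s < d` once `d ≥ 2`: a shortest cycle has no
chords, so if it passed through all `d` vertices, every row of every power of `M` would have a
single positive entry. With `s ≤ d - 1`, `d - s + s * (d - 1) ≤ (d - 1) ^ 2 + 1`.
-/

open Finset

theorem wielandt_exponent_le {d s : ℕ} (hs : s < d) : d - s + s * (d - 1) ≤ d ^ 2 - 2 * d + 2 := by
  obtain ⟨e, rfl⟩ := Nat.exists_eq_add_of_lt hs
  have hsq : (s + e + 1) ^ 2 = (s + e) ^ 2 + 2 * (s + e) + 1 := by ring
  have hle : e + s * (s + e) ≤ (s + e) ^ 2 := by nlinarith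
  rw [Nat.add_sub_cancel, show s + e + 1 - s = e + 1 by omega]
  omega

theorem injOn_range_of_lt_imp_ne {α : Type*} {f : ℕ → α} {m : ℕ}
    (h : ∀ a b, a < b → b < m → f a ≠ f b) : Set.InjOn f (range m) := by
  intro a ha b hb hab
  simp only [coe_range, Set.mem_Iio] at ha hb
  rcases lt_trichotomy a b with hlt | heq | hgt
  · exact absurd hab (h a b hlt hb)
  · exact heq
  · exact absurd hab.symm (h b a hgt ha)

namespace Matrix

variable {n R : Type*} [CommSemiring R] [PartialOrder R] [CanonicallyOrderedAdd R]

theorem one_apply_pos_iff [DecidableEq n] [Nontrivial R] {i j : n} :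
    0 < (1 : Matrix n n R) i j ↔ i = j := by
  by_cases h : i = j <;> simp [one_apply, h]

variable [NoZeroDivisors R]

theorem mul_apply_pos_iff {l m o : Type*} [Fintype m] {A : Matrix l m R} {B : Matrix m o R}
    {i : l} {j : o} : 0 < (A * B) i j ↔ ∃ t, 0 < A i t ∧ 0 < B t j := by
  simp [mul_apply, Finset.sum_pos_iff]

variable [Fintype n] [DecidableEq n] {M : Matrix n n R}

theorem pow_add_apply_pos_iff {a b : ℕ} {i j : n} :
    0 < (M ^ (a + b)) i j ↔ ∃ t, 0 < (M ^ a) i t ∧ 0 < (M ^ b) t j := by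
  rw [pow_add, mul_apply_pos_iff]

theorem pow_succ_apply_pos_iff {a : ℕ} {i j : n} :
    0 < (M ^ (a + 1)) i j ↔ ∃ t, 0 < (M ^ a) i t ∧ 0 < M t j := by
  rw [pow_succ, mul_apply_pos_iff]

theorem pow_apply_pos_of_forall_apply_pos (h : ∀ i j, 0 < M i j) {k : ℕ} (hk : 0 < k)
    (i j : n) : 0 < (M ^ k) i j := by
  induction k, hk using Nat.le_induction with
  | base => simpa using h i j
  | succ k hk ih => exact pow_succ_apply_pos_iff.2 ⟨j, ih, h j j⟩

variable [Nontrivial R]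

theorem pow_apply_pos_of_walk {w : ℕ → n} {m : ℕ} (hw : ∀ t < m, 0 < M (w t) (w (t + 1)))
    {a b : ℕ} (hab : a ≤ b) (hbm : b ≤ m) : 0 < (M ^ (b - a)) (w a) (w b) := by
  induction b, hab using Nat.le_induction with
  | base => simp
  | succ b hab ih =>
    rw [Nat.sub_add_comm hab, pow_succ_apply_pos_iff]
    exact ⟨w b, ih (by omega), hw b (by omega)⟩

theorem pow_apply_pos_self {u : n} (hu : 0 < M u u) (k : ℕ) : 0 < (M ^ k) u u := by
  simpa using pow_apply_pos_of_walk (w := fun _ ↦ u) (fun _ _ ↦ hu) (Nat.zero_le k) le_rfl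

theorem exists_walk_of_pow_apply_pos {m : ℕ} {i j : n} (h : 0 < (M ^ m) i j) :
    ∃ w : ℕ → n, w 0 = i ∧ w m = j ∧ ∀ t < m, 0 < M (w t) (w (t + 1)) := by
  induction m generalizing j with
  | zero => exact ⟨fun _ ↦ i, rfl, (one_apply_pos_iff.1 h), by simp⟩
  | succ m ih =>
    obtain ⟨t, hit, htj⟩ := pow_succ_apply_pos_iff.1 h
    obtain ⟨w, hw0, hwm, hw⟩ := ih hit
    refine ⟨fun u ↦ if u = m + 1 then j else w u, by simpa using hw0, by simp, fun u hu ↦ ?_⟩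
    rcases Nat.lt_succ_iff_lt_or_eq.1 hu with hu | rfl
    · simpa [show u ≠ m + 1 by omega, hu.ne] using hw u hu
    · simpa [hwm] using htj

theorem exists_pow_apply_pos_le_card_compl {T : Finset n} {m : ℕ} {i j : n} (hj : j ∈ T)
    (h : 0 < (M ^ m) i j) : ∃ m' ≤ #Tᶜ, ∃ j' ∈ T, 0 < (M ^ m') i j' := by
  induction m using Nat.strong_induction_on generalizing j with
  | _ m ih =>
  obtain ⟨w, rfl, rfl, hw⟩ := exists_walk_of_pow_apply_pos h
  have seg {a b : ℕ} (hab : a ≤ b) (hbm : b ≤ m) := pow_apply_pos_of_walk hw hab hbm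
  by_cases hvisit : ∃ t < m, w t ∈ T
  · obtain ⟨t, ht, htT⟩ := hvisit
    exact ih t ht htT (by simpa using seg (Nat.zero_le t) ht.le)
  by_cases hrep : ∃ a b, a < b ∧ b < m ∧ w a = w b
  · obtain ⟨a, b, hab, hbm, heq⟩ := hrep
    have hcut : 0 < (M ^ (a + (m - b))) (w 0) (w m) := pow_add_apply_pos_iff.2
      ⟨w a, by simpa using seg (Nat.zero_le a) (by omega), heq ▸ seg hbm.le le_rfl⟩
    exact ih _ (by omega) hj hcut
  -- now `w 0, …, w (m - 1)` are distinct vertices outside `T`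
  push Not at hvisit hrep
  refine ⟨m, ?_, w m, hj, h⟩
  simpa using card_le_card_of_injOn w (fun t ht ↦ by simpa using hvisit t (by simpa using ht))
    (injOn_range_of_lt_imp_ne fun a b hab hbm ↦ hrep a b hab hbm)

theorem exists_pow_apply_pos_of_pow_apply_pos_self {s : ℕ} (hs : 0 < s) {u : n}
    (hu : 0 < (M ^ s) u u) (e : ℕ) : ∃ v, 0 < (M ^ e) u v ∧ 0 < (M ^ s) v v := by
  obtain ⟨k, rfl⟩ : ∃ k, s = k + 1 := ⟨s - 1, by omega⟩
  induction e with
  | zero => exact ⟨u, by simp, hu⟩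
  | succ e ih =>
    obtain ⟨v, huv, hv⟩ := ih
    obtain ⟨v', hvv', hv'v⟩ := pow_add_apply_pos_iff.1 (add_comm k 1 ▸ hv)
    rw [pow_one] at hvv'
    exact ⟨v', pow_succ_apply_pos_iff.2 ⟨v, huv, hvv'⟩, pow_succ_apply_pos_iff.2 ⟨v, hv'v, hvv'⟩⟩

theorem exists_pow_apply_pos_of_card_le {s : ℕ} (hs : 0 < s) {S : Finset n}
    (hS : ∀ v ∈ S, 0 < (M ^ s) v v) {m : ℕ} {i u : n} (hu : u ∈ S) (hiu : 0 < (M ^ m) i u)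
    {k : ℕ} (hk : Fintype.card n - #S ≤ k) : ∃ v, 0 < (M ^ k) i v ∧ 0 < (M ^ s) v v := by
  obtain ⟨m', hm', v, hv, hiv⟩ := exists_pow_apply_pos_le_card_compl hu hiu
  rw [card_compl] at hm'
  obtain ⟨v', hvv', hv'⟩ := exists_pow_apply_pos_of_pow_apply_pos_self hs (hS v hv) (k - m')
  refine ⟨v', ?_, hv'⟩
  rw [← Nat.add_sub_cancel' (hm'.trans hk)]
  exact pow_add_apply_pos_iff.2 ⟨v, hiv, hvv'⟩

theorem pow_card_sub_one_apply_pos {u j : n} (hu : 0 < M u u) {m : ℕ} (h : 0 < (M ^ m) u j) :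
    0 < (M ^ (Fintype.card n - 1)) u j := by
  obtain ⟨m', hm', j', hj', huj'⟩ := exists_pow_apply_pos_le_card_compl (mem_singleton_self j) h
  rw [mem_singleton] at hj'
  subst hj'
  rw [card_compl, card_singleton] at hm'
  rw [← Nat.sub_add_cancel hm', pow_add_apply_pos_iff]
  exact ⟨u, pow_apply_pos_self hu _, huj'⟩

structure IsShortestCycle (M : Matrix n n R) (s : ℕ) (w : ℕ → n) : Prop where
  pos : 0 < s
  closed : w s = w 0
  walk : ∀ t < s, 0 < M (w t) (w (t + 1))
  minimal : ∀ t u, 0 < t → 0 < (M ^ t) u u → s ≤ t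

theorem exists_isShortestCycle {m : ℕ} (hm : 0 < m) {v : n} (hv : 0 < (M ^ m) v v) :
    ∃ s w, IsShortestCycle M s w := by
  classical
  have h : ∃ t, 0 < t ∧ ∃ v, 0 < (M ^ t) v v := ⟨m, hm, v, hv⟩
  obtain ⟨hs, v, hv⟩ := Nat.find_spec h
  obtain ⟨w, hw0, hws, hw⟩ := exists_walk_of_pow_apply_pos hv
  exact ⟨Nat.find h, w, hs, hws.trans hw0.symm, hw, fun t u ht hu ↦ Nat.find_min' h ⟨ht, u, hu⟩⟩

namespace IsShortestCycle

variable {s : ℕ} {w : ℕ → n} (hc : IsShortestCycle M s w)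
include hc

theorem pow_apply_pos {a b : ℕ} (hab : a ≤ b) (hb : b ≤ s) :
    0 < (M ^ (b - a)) (w a) (w b) :=
  pow_apply_pos_of_walk hc.walk hab hb

theorem pow_apply_pos_from_start {a : ℕ} (ha : a ≤ s) : 0 < (M ^ a) (w 0) (w a) := by
  simpa using hc.pow_apply_pos (Nat.zero_le a) ha

theorem pow_apply_pos_to_start {a : ℕ} (ha : a ≤ s) : 0 < (M ^ (s - a)) (w a) (w 0) :=
  hc.closed ▸ hc.pow_apply_pos ha le_rfl

theorem pow_apply_pos_self {a : ℕ} (ha : a ≤ s) : 0 < (M ^ s) (w a) (w a) := by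
  rw [← Nat.sub_add_cancel ha, pow_add_apply_pos_iff]
  exact ⟨w 0, hc.pow_apply_pos_to_start ha, hc.pow_apply_pos_from_start ha⟩

theorem ne_of_lt {a b : ℕ} (hab : a < b) (hb : b < s) : w a ≠ w b := by
  intro heq
  have := hc.minimal (b - a) (w a) (by omega) (heq ▸ hc.pow_apply_pos hab.le hb.le)
  omega

theorem card_image : #((range s).image w) = s := by
  rw [card_image_of_injOn (injOn_range_of_lt_imp_ne fun a b hab hb ↦ hc.ne_of_lt hab hb),
    card_range]

theorem pow_apply_pos_self_of_mem {u : n} (hu : u ∈ (range s).image w) :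
    0 < (M ^ s) u u := by
  obtain ⟨a, ha, rfl⟩ := mem_image.1 hu
  exact hc.pow_apply_pos_self (mem_range.1 ha).le

theorem eq_succ_mod_of_apply_pos {a b : ℕ} (ha : a < s) (hb : b < s) (h : 0 < M (w a) (w b)) :
    b = (a + 1) % s := by
  -- the edge closes a walk along the cycle from `w b` to `w a`, which must not be shorter than `s`
  rcases le_or_gt b a with hba | hab
  · have := hc.minimal (a - b + 1) (w b) (by omega)
      (pow_succ_apply_pos_iff.2 ⟨w a, hc.pow_apply_pos hba ha.le, h⟩)
    obtain ⟨rfl, rfl⟩ : b = 0 ∧ s = a + 1 := by omega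
    simp
  · have := hc.minimal (s - b + a + 1) (w b) (by omega) (pow_succ_apply_pos_iff.2
      ⟨w a, pow_add_apply_pos_iff.2 ⟨w 0, hc.pow_apply_pos_to_start hb.le,
        hc.pow_apply_pos_from_start ha.le⟩, h⟩)
    rw [Nat.mod_eq_of_lt (by omega)]
    omega

theorem eq_of_pow_apply_pos (hcard : s = Fintype.card n) {a m : ℕ} (ha : a < s) {j : n}
    (h : 0 < (M ^ m) (w a) j) : j = w ((a + m) % s) := by
  have hsurj (j : n) : ∃ b < s, w b = j := by
    have hj : j ∈ (range s).image w := eq_univ_of_card _ (hc.card_image.trans hcard) ▸ mem_univ j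
    simpa using hj
  induction m generalizing j with
  | zero => simpa [Nat.mod_eq_of_lt ha] using (one_apply_pos_iff.1 h).symm
  | succ m ih =>
    obtain ⟨t, hat, htj⟩ := pow_succ_apply_pos_iff.1 h
    obtain ⟨b, hb, rfl⟩ := hsurj j
    rw [ih hat] at htj
    rw [hc.eq_succ_mod_of_apply_pos (Nat.mod_lt _ hc.pos) hb htj, Nat.mod_add_mod, add_assoc]

theorem lt_card (hn : 1 < Fintype.card n) {N : ℕ} (hN : ∀ i j, 0 < (M ^ N) i j) :
    s < Fintype.card n := by
  refine (hc.card_image ▸ card_le_univ _ : s ≤ _).lt_of_ne fun hcard ↦ ?_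
  have h₀ := hc.eq_of_pow_apply_pos hcard hc.pos (hN (w 0) (w 0))
  have h₁ := hc.eq_of_pow_apply_pos hcard hc.pos (hN (w 0) (w 1))
  exact hc.ne_of_lt zero_lt_one (by omega) (h₀.trans h₁.symm)

end IsShortestCycle

theorem exists_pow_pos_le_of_pow_pos {N : ℕ} (hN : ∀ i j, 0 < (M ^ N) i j) :
    ∃ k ≤ Fintype.card n ^ 2 - 2 * Fintype.card n + 2, ∀ i j, 0 < (M ^ k) i j := by
  set d := Fintype.card n
  rcases lt_or_ge d 2 with hd | hd
  · have : Subsingleton n := Fintype.card_le_one_iff_subsingleton.1 (by omega)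
    exact ⟨0, by omega, fun i j ↦ by simp [Subsingleton.elim i j]⟩
  obtain ⟨i₀, j₀, hne⟩ := Fintype.exists_pair_of_one_lt_card hd
  have hN0 : 0 < N := Nat.pos_of_ne_zero fun h ↦
    hne (one_apply_pos_iff.1 (by simpa [h] using hN i₀ j₀))
  obtain ⟨s, w, hc⟩ := exists_isShortestCycle hN0 (hN i₀ i₀)
  have hsd := hc.lt_card hd hN
  have hreach (i : n) : ∃ u, 0 < (M ^ (d - s)) i u ∧ 0 < (M ^ s) u u :=
    exists_pow_apply_pos_of_card_le hc.pos (fun _ ↦ hc.pow_apply_pos_self_of_mem)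
      (mem_image_of_mem w (mem_range.2 hc.pos)) (hN i (w 0)) (by rw [hc.card_image])
  have hspread (u j : n) (hu : 0 < (M ^ s) u u) : 0 < (M ^ (s * (d - 1))) u j := by
    rw [pow_mul]
    refine pow_card_sub_one_apply_pos hu (m := N) ?_
    rw [← pow_mul, mul_comm, pow_mul]
    exact pow_apply_pos_of_forall_apply_pos hN hc.pos u j
  refine ⟨d - s + s * (d - 1), ?_, fun i j ↦ ?_⟩
  · exact wielandt_exponent_le hsd
  · obtain ⟨u, hiu, hu⟩ := hreach i
    exact pow_add_apply_pos_iff.2 ⟨u, hiu, hspread u j hu⟩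

end Matrix

/-- A square matrix with nonnegative entries is primitive if some power has all
entries strictly positive. Lemma 2.4 (Horn–Johnson): for a primitive `d × d`
matrix, some power `k ≤ d² - 2d + 2` already has all entries strictly positive. -/
theorem primitive_pow_pos_of_le (d : ℕ) (M : Matrix (Fin d) (Fin d) ℕ)
    (hprim : ∃ n : ℕ, ∀ i j, 0 < (M ^ n) i j) :
    ∃ k ≤ d ^ 2 - 2 * d + 2, ∀ i j, 0 < (M ^ k) i j := by
  obtain ⟨n, hn⟩ := hprim
  simpa using Matrix.exists_pow_pos_le_of_pow_pos hn
end

section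
/- Let M = (m_{i,j}) be a matrix with strictly positive entries and let x = (x_i) be its unique right eigenvector with positive entries normalized so that ∑ x_i = 1 (the Perron eigenvector). Then for all i: min_j (m_{i,j} / ∑_k m_{k,j}) ≤ x_i ≤ max_j (m_{i,j} / ∑_k m_{k,j}). -/
/-!
Summing the eigenvalue equation `μ x = M x` over its coordinates and using `∑ x = 1` gives
`μ = ∑ j, S j * x j`, where `S j` is the `j`-th column sum of `M`. Row `i` of the same equation reads
`μ * x i = ∑ j, (S j * x j) * (M i j / S j)`, so `x i` is the centre of mass of the ratios
`M i j / S j` with the positive weights `S j * x j`, and lies between their least and largest value.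
-/

open Finset

namespace Matrix

theorem sum_mulVec_eq_sum_colSum_mul {m n R : Type*} [Fintype m] [Fintype n] [CommSemiring R]
    (M : Matrix m n R) (x : n → R) : ∑ i, (M *ᵥ x) i = ∑ j, (∑ i, M i j) * x j := by
  simp only [mulVec, dotProduct, sum_mul]
  exact sum_comm

end Matrix

section CenterMass

variable {ι R α : Type*} [Fintype ι] [Field R] [LinearOrder R] [ConditionallyCompleteLinearOrder α]
  [AddCommGroup α] [IsOrderedAddMonoid α] [Module R α] [PosSMulMono R α] {w : ι → R} {f : ι → α}

theorem ciInf_le_centerMass (hw₀ : ∀ i, 0 ≤ w i) (hw₁ : 0 < ∑ i, w i) :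
    ⨅ i, f i ≤ univ.centerMass w f := by
  have : Nonempty ι := univ_nonempty_iff.mp (nonempty_of_sum_ne_zero hw₁.ne')
  rw [← inf'_univ_eq_ciInf]
  exact inf_le_centerMass (fun i _ => hw₀ i) hw₁

theorem centerMass_le_ciSup (hw₀ : ∀ i, 0 ≤ w i) (hw₁ : 0 < ∑ i, w i) :
    univ.centerMass w f ≤ ⨆ i, f i := by
  have : Nonempty ι := univ_nonempty_iff.mp (nonempty_of_sum_ne_zero hw₁.ne')
  rw [← sup'_univ_eq_ciSup]
  exact centerMass_le_sup (fun i _ => hw₀ i) hw₁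

end CenterMass

/-- Lemma (Perron bounds): if `M` has strictly positive entries and `x` is its (unique)
right eigenvector with positive entries normalized so that `∑ x i = 1`, then for every `i`,
`min_j (M i j / ∑_k M k j) ≤ x i ≤ max_j (M i j / ∑_k M k j)`. -/
theorem perron_eigenvector_bounds (d : ℕ) (hd : 0 < d)
    (M : Matrix (Fin d) (Fin d) ℝ) (hpos : ∀ i j, 0 < M i j)
    (x : Fin d → ℝ) (hx : ∀ i, 0 < x i) (hsum : ∑ i, x i = 1)
    (μ : ℝ) (heig : M.mulVec x = μ • x) :
    ∀ i, (⨅ j, M i j / ∑ k, M k j) ≤ x i ∧ x i ≤ ⨆ j, M i j / ∑ k, M k j := by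
  set S : Fin d → ℝ := fun j => ∑ k, M k j
  have hne : (univ : Finset (Fin d)).Nonempty := ⟨⟨0, hd⟩, mem_univ _⟩
  have hS : ∀ j, 0 < S j := fun j => sum_pos (fun k _ => hpos k j) hne
  have hw₀ : ∀ j, 0 ≤ S j * x j := fun j => (mul_pos (hS j) (hx j)).le
  have hμ : ∑ j, S j * x j = μ := by
    rw [← M.sum_mulVec_eq_sum_colSum_mul, heig]
    simp [← mul_sum, hsum]
  have hw₁ : 0 < ∑ j, S j * x j := sum_pos (fun j _ => mul_pos (hS j) (hx j)) hne
  intro i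
  have hcenter : univ.centerMass (fun j => S j * x j) (fun j => M i j / S j) = x i := by
    have hrow : ∑ j, (S j * x j) * (M i j / S j) = μ * x i := by
      rw [← smul_eq_mul, ← Pi.smul_apply, ← heig]
      exact sum_congr rfl fun j _ => by field_simp [(hS j).ne']
    have hμ₀ : μ ≠ 0 := hμ ▸ hw₁.ne'
    simp only [centerMass, smul_eq_mul, hμ, hrow]
    field_simp
  exact ⟨hcenter ▸ ciInf_le_centerMass hw₀ hw₁, hcenter ▸ centerMass_le_ciSup hw₀ hw₁⟩
end

section
/- Let x be a uniformly recurrent sequence over a finite alphabet and u a non-empty prefix of x. Then the set R_{x,u} of return words to u in x is a code: the induced monoid morphism Θ_{x,u} from the free monoid over R_{x,u} into A* is injective. -/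
/-- The factor of the sequence `x` starting at position `i` of length `n`. -/
def seqWord {A : Type*} (x : ℕ → A) (i n : ℕ) : List A :=
  (List.range n).map (fun k => x (i + k))

/-- The word `u` occurs in the sequence `x` at position `i`. -/
def occursAt {A : Type*} (x : ℕ → A) (u : List A) (i : ℕ) : Prop :=
  seqWord x i u.length = u

/-- `u` is a factor of the sequence `x`. -/
def IsFactor {A : Type*} (x : ℕ → A) (u : List A) : Prop :=
  ∃ i, occursAt x u i

/-- `u` is a prefix of the sequence `x`. -/
def IsPrefixSeq {A : Type*} (u : List A) (x : ℕ → A) : Prop :=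
  occursAt x u 0

/-- `x` is uniformly recurrent: every factor occurs in every sufficiently long window. -/
def UnifRec {A : Type*} (x : ℕ → A) : Prop :=
  ∀ u : List A, IsFactor x u → ∃ C, ∀ i, ∃ j, i ≤ j ∧ j < i + C ∧ occursAt x u j

/-- `w` is a return word to `u` in `x`: the factor between two consecutive occurrences of `u`. -/
def IsReturnWord {A : Type*} (x : ℕ → A) (u w : List A) : Prop :=
  ∃ i j, i < j ∧ occursAt x u i ∧ occursAt x u j ∧
    (∀ k, i < k → k < j → ¬ occursAt x u k) ∧ w = seqWord x i (j - i)

/-- Apply a morphism (given on letters) to a word, by concatenation. -/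
def morphApply {I A : Type*} (θ : I → List A) (l : List I) : List A :=
  (l.map θ).flatten

/-- Iterate an endomorphism `σ` of the free monoid `n` times on a word. -/
def morphIter {A : Type*} (σ : A → List A) : ℕ → List A → List A
  | 0, l => l
  | n + 1, l => morphApply σ (morphIter σ n l)

/-- `x` is ultimately periodic. -/
def UltPeriodic {A : Type*} (x : ℕ → A) : Prop :=
  ∃ p > 0, ∃ N, ∀ n ≥ N, x (n + p) = x n

/-- `x` is linearly recurrent with constant `K`: it is uniformly recurrent and two
successive occurrences of any nonempty factor `u` differ by at most `K * |u|`. -/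
def LinRec {A : Type*} (K : ℕ) (x : ℕ → A) : Prop :=
  UnifRec x ∧ ∀ u : List A, u ≠ [] → IsFactor x u →
    ∀ i, occursAt x u i → ∃ j, i < j ∧ j ≤ i + K * u.length ∧ occursAt x u j

/-- `σ` is prolongable on the letter `a`. -/
def Prolongable {A : Type*} (σ : A → List A) (a : A) : Prop :=
  (∃ t, σ a = a :: t ∧ t ≠ []) ∧
    Filter.Tendsto (fun n => (morphIter σ n [a]).length) Filter.atTop Filter.atTop

/-- `σ` is growing: the image of each letter has length tending to infinity. -/
def Growing {A : Type*} (σ : A → List A) : Prop :=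
  ∀ a, Filter.Tendsto (fun n => (morphIter σ n [a]).length) Filter.atTop Filter.atTop

/-- `σ` is primitive: some power sends every letter to a word containing every letter. -/
def Primitive {A : Type*} (σ : A → List A) : Prop :=
  ∃ n > 0, ∀ a b : A, b ∈ morphIter σ n [a]

/-- `x` is the fixed point `σ^∞(a)` of `σ`, prolongable on `a`. -/
def IsFixedPointOf {A : Type*} (σ : A → List A) (a : A) (x : ℕ → A) : Prop :=
  x 0 = a ∧ ∀ n, IsPrefixSeq (morphIter σ n [a]) x

/-- The word `w` belongs to the language of the endomorphism `σ`. -/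
def InLang {A : Type*} (σ : A → List A) (w : List A) : Prop :=
  ∃ a n, w <:+: morphIter σ n [a]

/-- The word `u` occurs at position `i` in the word `w`. -/
def listOccursAt {A : Type*} (w u : List A) (i : ℕ) : Prop :=
  i + u.length ≤ w.length ∧ (w.drop i).take u.length = u

/-- `|σ^k|`: the maximal length of the image of a letter under `σ^k`. -/
def maxLen {A : Type*} [Fintype A] [Nonempty A] (σ : A → List A) (k : ℕ) : ℕ :=
  Finset.univ.sup' Finset.univ_nonempty (fun a => (morphIter σ k [a]).length)

/-- `⟨σ^k⟩`: the minimal length of the image of a letter under `σ^k`. -/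
def minLen {A : Type*} [Fintype A] [Nonempty A] (σ : A → List A) (k : ℕ) : ℕ :=
  Finset.univ.inf' Finset.univ_nonempty (fun a => (morphIter σ k [a]).length)

/-- `(R, θ, z)` is the derived-sequence data of `x` on the prefix `u`: `θ 0, …, θ (R-1)`
enumerate the return words to `u` in order of first appearance in `x`, `z` is the derived
sequence, i.e. the coding of the decomposition of `x` into return words to `u`,
so that `Θ_{x,u}(z) = x`. -/
def IsDerivedSeq {A : Type*} (x : ℕ → A) (u : List A) (R : ℕ)
    (θ : ℕ → List A) (z : ℕ → ℕ) : Prop :=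
  (∀ i < R, IsReturnWord x u (θ i)) ∧
  (∀ w, IsReturnWord x u w → ∃ i < R, θ i = w) ∧
  (∀ i < R, ∀ j < R, i < j →
      sInf {k | occursAt x (θ i) k} < sInf {k | occursAt x (θ j) k}) ∧
  (∀ k, z k < R) ∧
  (∀ n, IsPrefixSeq (morphApply θ (seqWord z 0 n)) x)


/-!
A return word `w` to `u` satisfies: `u` is a prefix of `w ++ u`, and `u` occurs in `w ++ u` at
no position strictly between `0` and `|w|`. Hence if `Θ(a :: l₁) = Θ(b :: l₂)` with
`|θ a| ≤ |θ b|`, the occurrence of `u` that begins `Θ(l₁) ++ u` lies at position `|θ a|` of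
`θ b ++ u`, which forces `θ a = θ b`. Cancelling this common head and inducting gives
injectivity.
-/

open Function

section SeqWord

variable {A : Type*} (x : ℕ → A)

lemma seqWord_length (i n : ℕ) : (seqWord x i n).length = n := by
  simp [seqWord]

lemma seqWord_add (i m n : ℕ) :
    seqWord x i (m + n) = seqWord x i m ++ seqWord x (i + m) n := by
  simp only [seqWord, List.range_add, List.map_append, List.map_map]
  congr 1
  apply List.map_congr_left
  intro k _
  simp [Nat.add_assoc]

lemma seqWord_drop (i k n : ℕ) :
    (seqWord x i n).drop k = seqWord x (i + k) (n - k) := by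
  apply List.ext_getElem
  · simp [seqWord]
  · intro j _ _
    simp only [seqWord, List.getElem_drop, List.getElem_map, List.getElem_range]
    congr 1
    omega

lemma occursAt_iff_prefix_seqWord {u : List A} {i n : ℕ} (hn : u.length ≤ n) :
    occursAt x u i ↔ u <+: seqWord x i n := by
  obtain ⟨m, rfl⟩ := Nat.exists_eq_add_of_le hn
  rw [seqWord_add, List.prefix_iff_eq_take, List.take_left' (seqWord_length x i _), occursAt,
    eq_comm]

end SeqWord

namespace IsReturnWord

variable {A : Type*} {x : ℕ → A} {u w : List A}

lemma ne_nil (h : IsReturnWord x u w) : w ≠ [] := by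
  obtain ⟨i, j, hij, -, -, -, rfl⟩ := h
  rw [← List.length_pos_iff, seqWord_length]
  omega

lemma exists_append_eq_seqWord (h : IsReturnWord x u w) :
    ∃ i, occursAt x u i ∧ w ++ u = seqWord x i (w.length + u.length) ∧
      ∀ k, 0 < k → k < w.length → ¬ occursAt x u (i + k) := by
  obtain ⟨i, j, hij, hi, hj, hgap, rfl⟩ := h
  refine ⟨i, hi, ?_, fun k hk hkj => hgap (i + k) (by omega) ?_⟩
  · rw [seqWord_length, seqWord_add, Nat.add_sub_cancel' hij.le, hj]
  · rw [seqWord_length] at hkj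
    omega

lemma prefix_append (h : IsReturnWord x u w) : u <+: w ++ u := by
  obtain ⟨i, hi, hw, -⟩ := h.exists_append_eq_seqWord
  rw [hw, ← occursAt_iff_prefix_seqWord x (Nat.le_add_left _ _)]
  exact hi

lemma eq_zero_or_eq_length_of_prefix_drop (h : IsReturnWord x u w) {k : ℕ}
    (hk : k ≤ w.length) (hocc : u <+: (w ++ u).drop k) : k = 0 ∨ k = w.length := by
  obtain ⟨i, -, hw, hgap⟩ := h.exists_append_eq_seqWord
  rw [hw, seqWord_drop, ← occursAt_iff_prefix_seqWord x (by omega)] at hocc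
  by_contra hne
  exact hgap k (by omega) (by omega) hocc

lemma eq_of_append_eq {w' s s' : List A} (h : IsReturnWord x u w) (h' : IsReturnWord x u w')
    (hs : u <+: s ++ u) (hs' : u <+: s' ++ u) (heq : w ++ s = w' ++ s')
    (hle : w.length ≤ w'.length) : w = w' := by
  obtain ⟨r, hr⟩ := hs
  obtain ⟨r', hr'⟩ := hs'
  have hprefix : w <+: w' :=
    List.prefix_of_prefix_length_le (heq ▸ List.prefix_append w s) (List.prefix_append w' s') hle
  have hdrop : u <+: (w' ++ u).drop w.length ++ r' := by
    have : w' ++ u ++ r' = w ++ (u ++ r) := by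
      rw [List.append_assoc, hr', ← List.append_assoc, ← heq, List.append_assoc, hr]
    rw [← List.drop_append_of_le_length (by simp; omega), this, List.drop_left]
    exact List.prefix_append u r
  have hocc : u <+: (w' ++ u).drop w.length :=
    List.prefix_of_prefix_length_le hdrop (List.prefix_append _ _) (by simp; omega)
  rcases h'.eq_zero_or_eq_length_of_prefix_drop hle hocc with hzero | hlen
  · exact absurd (List.length_eq_zero_iff.mp hzero) h.ne_nil
  · exact hprefix.eq_of_length hlen

end IsReturnWord

section MorphApply

variable {I A : Type*} (θ : I → List A)

@[simp]
lemma morphApply_nil : morphApply θ [] = [] := rfl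

@[simp]
lemma morphApply_cons (a : I) (l : List I) : morphApply θ (a :: l) = θ a ++ morphApply θ l := by
  simp [morphApply]

lemma prefix_morphApply_append {u : List A} (h : ∀ c, u <+: θ c ++ u) (l : List I) :
    u <+: morphApply θ l ++ u := by
  induction l with
  | nil => exact List.prefix_refl u
  | cons c l ih =>
    obtain ⟨r, hr⟩ := ih
    rw [morphApply_cons, List.append_assoc, ← hr, ← List.append_assoc]
    exact (h c).trans (List.prefix_append _ r)

lemma morphApply_injective_of_head_eq (hne : ∀ c, θ c ≠ [])
    (hhead : ∀ a b l₁ l₂, θ a ++ morphApply θ l₁ = θ b ++ morphApply θ l₂ → a = b) :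
    Injective (morphApply θ) := by
  intro l₁
  induction l₁ with
  | nil =>
    rintro (_ | ⟨b, l₂⟩) h
    · rfl
    · simp [hne b] at h
  | cons a l₁ ih =>
    rintro (_ | ⟨b, l₂⟩) h
    · simp [hne a] at h
    · rw [morphApply_cons, morphApply_cons] at h
      obtain rfl := hhead a b l₁ l₂ h
      rw [ih (List.append_cancel_left h)]

end MorphApply

theorem returnWords_code_general {A : Type*} (x : ℕ → A)
    (u : List A)
    {I : Type*} (θ : I → List A) (hinj : Function.Injective θ)
    (hrange : Set.range θ = {w | IsReturnWord x u w}) :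
    Function.Injective (morphApply θ) := by
  have hret : ∀ c, IsReturnWord x u (θ c) := fun c => hrange.subset ⟨c, rfl⟩
  have hpre := prefix_morphApply_append θ fun c => (hret c).prefix_append
  refine morphApply_injective_of_head_eq θ (fun c => (hret c).ne_nil) fun a b l₁ l₂ h => hinj ?_
  rcases le_total (θ a).length (θ b).length with hle | hle
  · exact (hret a).eq_of_append_eq (hret b) (hpre l₁) (hpre l₂) h hle
  · exact ((hret b).eq_of_append_eq (hret a) (hpre l₂) (hpre l₁) h.symm hle).symm

/-- Proposition (Durand 1998): for a uniformly recurrent sequence `x` and a non-empty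
prefix `u` of `x`, the set of return words to `u` is a code, i.e. the monoid morphism
`Θ_{x,u}` induced by any (injective) enumeration `θ` of the return words to `u`
is injective on the free monoid. -/
theorem returnWords_code {A : Type*} [Fintype A] (x : ℕ → A) (hur : UnifRec x)
    (u : List A) (hu : u ≠ []) (hup : IsPrefixSeq u x)
    {I : Type*} (θ : I → List A) (hinj : Function.Injective θ)
    (hrange : Set.range θ = {w | IsReturnWord x u w}) :
    Function.Injective (morphApply θ) :=
  returnWords_code_general x u θ hinj hrange
end
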